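/- Assume L ⊆ Σ^ω is recognized by some deterministic co-Büchi automaton. For every pair (u,v) of finite words: θ(u,v) is empty if and only if (u,v) ≈_L ⊥. -/

import Mathlib

open Classical

/-- Rank of a transition in a co-Büchi automaton: `one` or `two`. -/
inductive Rk | one | two
deriving DecidableEq

/-- A co-Büchi automaton over alphabet `A` with state type `Q`:
initial states and a transition relation where each transition carries a rank. -/
structure CoBuchi (A : Type) (Q : Type) where
  init : Set Q
  delta : Set (Q × A × Rk × Q)

namespace CoBuchi

variable {A Q : Type}

/-- Every state has an outgoing transition on every letter. -/
def Total (M : CoBuchi A Q) : Prop :=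
  ∀ q a, ∃ r q', (q, a, r, q') ∈ M.delta

/-- The prefix `α[0..n-1]` of an infinite word. -/
def prefW (α : ℕ → A) (n : ℕ) : List A := (List.range n).map α

/-- The infinite word `a·w`. -/
def consW (a : A) (w : ℕ → A) : ℕ → A := fun n => match n with
  | 0 => a
  | Nat.succ k => w k

/-- `L(M,q)`: infinite words having a run from `q` with only finitely many rank-1
transitions. -/
def LangFrom (M : CoBuchi A Q) (q : Q) : Set (ℕ → A) :=
  { w | ∃ (ρ : ℕ → Q) (r : ℕ → Rk), ρ 0 = q ∧
        (∀ n, (ρ n, w n, r n, ρ (n + 1)) ∈ M.delta) ∧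
        ∃ N, ∀ n, N ≤ n → r n = Rk.two }

/-- `L(M)`: the language of the automaton. -/
def Lang (M : CoBuchi A Q) : Set (ℕ → A) :=
  { w | ∃ q ∈ M.init, w ∈ M.LangFrom q }

/-- `q →₂^w q'`: a finite run from `q` to `q'` on `w` using only rank-2 transitions. -/
def SafeReach (M : CoBuchi A Q) : Q → List A → Q → Prop
  | q, [], q' => q = q'
  | q, a :: w, q' => ∃ p, (q, a, Rk.two, p) ∈ M.delta ∧ SafeReach M p w q'

/-- A finite run from `q` to `q'` on `w` using transitions of any rank. -/
def Reach (M : CoBuchi A Q) : Q → List A → Q → Prop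
  | q, [], q' => q = q'
  | q, a :: w, q' => ∃ r p, (q, a, r, p) ∈ M.delta ∧ Reach M p w q'

/-- Safe language of a state. -/
def Lsf (M : CoBuchi A Q) (q : Q) : Set (List A) := { w | ∃ q', M.SafeReach q w q' }

/-- Semantically-deterministic: every transition respects residuals. -/
def SemDet (M : CoBuchi A Q) : Prop :=
  ∀ p a rk q, (p, a, rk, q) ∈ M.delta →
    M.LangFrom q = { w | consW a w ∈ M.LangFrom p }

/-- Unsafe-saturated: all residual-respecting rank-1 transitions are present. -/
def UnsafeSat (M : CoBuchi A Q) : Prop :=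
  ∀ p a q, M.LangFrom q = { w | consW a w ∈ M.LangFrom p } →
    (p, a, Rk.one, q) ∈ M.delta

/-- Safe-deterministic: at most one rank-2 transition per state and letter. -/
def SafeDet (M : CoBuchi A Q) : Prop :=
  ∀ p a q q', (p, a, Rk.two, q) ∈ M.delta → (p, a, Rk.two, q') ∈ M.delta → q = q'

/-- Normalized: every rank-2 transition can be completed to a rank-2 loop. -/
def Normalized (M : CoBuchi A Q) : Prop :=
  ∀ q a q', (q, a, Rk.two, q') ∈ M.delta → ∃ x, M.SafeReach q' x q

/-- Deterministic: one initial state, exactly one transition per state and letter. -/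
def Deterministic (M : CoBuchi A Q) : Prop :=
  (∃! q, q ∈ M.init) ∧ ∀ p a, ∃! t : Rk × Q, (p, a, t.1, t.2) ∈ M.delta

/-- History-deterministic: a strategy `σ : Σ* → Q` resolving the nondeterminism,
whose run on every `α ∈ L(M)` can be ranked with finitely many rank-1 transitions. -/
def HistoryDet (M : CoBuchi A Q) : Prop :=
  ∃ σ : List A → Q, σ [] ∈ M.init ∧
    (∀ w a, ∃ rk, (σ w, a, rk, σ (w ++ [a])) ∈ M.delta) ∧
    ∀ α ∈ M.Lang, ∃ r : ℕ → Rk,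
      (∀ n, (σ (prefW α n), α n, r n, σ (prefW α (n + 1))) ∈ M.delta) ∧
      ∃ N, ∀ n, N ≤ n → r n = Rk.two

/-- `q` and `q'` are in the same safe SCC (mutually reachable via rank-2 runs). -/
def SameSafeSCC (M : CoBuchi A Q) (q q' : Q) : Prop :=
  (∃ x, M.SafeReach q x q') ∧ (∃ y, M.SafeReach q' y q)

end CoBuchi

section LangDefs

variable {A : Type} [Nonempty A]

/-- The infinite word `u·w`. -/
def appW (u : List A) (w : ℕ → A) : ℕ → A :=
  fun n => if h : n < u.length then u.get ⟨n, h⟩ else w (n - u.length)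

/-- The infinite word `v^ω` (arbitrary if `v = ε`). -/
noncomputable def iterW (v : List A) : ℕ → A :=
  fun n =>
    if h : v = [] then Classical.arbitrary A
    else v.get ⟨n % v.length, Nat.mod_lt _ (List.length_pos_iff.mpr h)⟩

/-- The ultimately periodic word `u v^ω`. -/
noncomputable def upW (u v : List A) : ℕ → A := appW u (iterW v)

/-- The right congruence `u ∼_L v`. -/
def SimL (L : Set (ℕ → A)) (u v : List A) : Prop :=
  ∀ w : ℕ → A, appW u w ∈ L ↔ appW v w ∈ L

/-- `(u,v) ≈_L ⊥`: `v ≠ ε` and `u(vx)^ω ∉ L` for all `x` with `uvx ∼_L u`. -/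
def ApproxBot (L : Set (ℕ → A)) (u v : List A) : Prop :=
  v ≠ [] ∧ ∀ x : List A, SimL L (u ++ v ++ x) u → upW u (v ++ x) ∉ L

/-- The safe language of a pair: `sfl(u,v) = {x | (u,vx) not ≈_L ⊥}`. -/
def Sfl (L : Set (ℕ → A)) (u v : List A) : Set (List A) :=
  { x | ¬ ApproxBot L u (v ++ x) }

/-- `(u,v) ≡_L (u',v')`. -/
def EquivL (L : Set (ℕ → A)) (u v u' v' : List A) : Prop :=
  SimL L (u ++ v) (u' ++ v') ∧ Sfl L u v = Sfl L u' v'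

/-- `(u,v)` is pointed. -/
def IsPointed (L : Set (ℕ → A)) (u v : List A) : Prop :=
  ¬ ApproxBot L u v ∧
    ∀ u₁ u₂ : List A, SimL L (u₁ ++ u₂) u → ¬ ApproxBot L u₁ (u₂ ++ v) →
      Sfl L u v = Sfl L u₁ (u₂ ++ v)

/-- `(u,v) ≈_L (u',v')` (for pairs with nonempty second components). -/
def ApproxL (L : Set (ℕ → A)) (u v u' v' : List A) : Prop :=
  SimL L u u' ∧ SimL L (u ++ v) (u' ++ v') ∧
    ∀ x : List A, SimL L (u ++ v ++ x) u →
      (upW u (v ++ x) ∈ L ↔ upW u' (v' ++ x) ∈ L)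

/-- `L` is recognized by some (total) deterministic co-Büchi automaton. -/
def DCWRecognizable (L : Set (ℕ → A)) : Prop :=
  ∃ (Q : Type) (_ : Fintype Q) (M : CoBuchi A Q), M.Deterministic ∧ M.Lang = L

/-- IsPointed pairs. -/
def PointedPair (L : Set (ℕ → A)) : Type :=
  { p : List A × List A // IsPointed L p.1 p.2 }

/-- `≡_L` as a setoid on all pairs. -/
def equivLSetoid (L : Set (ℕ → A)) : Setoid (List A × List A) where
  r p q := EquivL L p.1 p.2 q.1 q.2
  iseqv := {
    refl := fun p => ⟨fun w => Iff.rfl, rfl⟩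
    symm := fun h => ⟨fun w => (h.1 w).symm, h.2.symm⟩
    trans := fun h g => ⟨fun w => (h.1 w).trans (g.1 w), h.2.trans g.2⟩ }

/-- `≡_L` as a setoid on pointed pairs. -/
def canonSetoid (L : Set (ℕ → A)) : Setoid (PointedPair L) where
  r p q := EquivL L p.1.1 p.1.2 q.1.1 q.1.2
  iseqv := {
    refl := fun p => ⟨fun w => Iff.rfl, rfl⟩
    symm := fun h => ⟨fun w => (h.1 w).symm, h.2.symm⟩
    trans := fun h g => ⟨fun w => (h.1 w).trans (g.1 w), h.2.trans g.2⟩ }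

/-- States of the canonical automaton: `≡_L`-classes of pointed pairs. -/
def CanonState (L : Set (ℕ → A)) : Type := Quotient (canonSetoid L)

/-- The class `⟦u,v⟧` of a pointed pair. -/
def cls (L : Set (ℕ → A)) (u v : List A) (h : IsPointed L u v) : CanonState L :=
  Quotient.mk (canonSetoid L) ⟨(u, v), h⟩

/-- The canonical automaton `A_{≡_L}`. -/
def canonAut (L : Set (ℕ → A)) : CoBuchi A (CanonState L) where
  init := { s | ∃ (u v : List A) (h : IsPointed L u v),
              s = cls L u v h ∧ SimL L (u ++ v) [] }
  delta := { t |
    (∃ (u v : List A) (h : IsPointed L u v) (h' : IsPointed L u (v ++ [t.2.1])),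
        ¬ ApproxBot L u (v ++ [t.2.1]) ∧
        t.1 = cls L u v h ∧ t.2.2.1 = Rk.two ∧
        t.2.2.2 = cls L u (v ++ [t.2.1]) h') ∨
    (∃ (u v u' v' : List A) (h : IsPointed L u v) (h' : IsPointed L u' v'),
        SimL L (u ++ v ++ [t.2.1]) (u' ++ v') ∧
        t.1 = cls L u v h ∧ t.2.2.1 = Rk.one ∧ t.2.2.2 = cls L u' v' h') }

/-- `θ(u,v)`: states of `A_{≡_L}` reachable by reading `u` from an initial state
(any ranks) and then `v` via rank-2 transitions only. -/
def theta (L : Set (ℕ → A)) (u v : List A) : Set (CanonState L) :=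
  { q | ∃ p₀ ∈ (canonAut L).init, ∃ p,
          (canonAut L).Reach p₀ u p ∧ (canonAut L).SafeReach p v q }

/-- `(u,v)` is supported: `θ(u,v) ≠ ∅`. -/
def Supported (L : Set (ℕ → A)) (u v : List A) : Prop := (theta L u v).Nonempty

/-- `(u,v)` is double-supported: two distinct states of `θ(u,v)` in the same safe SCC. -/
def DoubleSupported (L : Set (ℕ → A)) (u v : List A) : Prop :=
  ∃ q ∈ theta L u v, ∃ q' ∈ theta L u v, q ≠ q' ∧ (canonAut L).SameSafeSCC q q'

/-- `(u,v)` is single-supported. -/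
def SingleSupported (L : Set (ℕ → A)) (u v : List A) : Prop :=
  Supported L u v ∧ ¬ DoubleSupported L u v

/-- `w` concatenated with itself `m` times. -/
def repCat (w : List A) : ℕ → List A
  | 0 => []
  | Nat.succ m => w ++ repCat w m

end LangDefs

/-!
A state of `θ(u,v)` is a class `⟦a,b⟧` with `ab ∼_L u` and `v ∈ sfl(a,b)`, and since
`sfl(w₁, w₂x) ⊆ sfl(u₁, x)` whenever `w₁w₂ ∼_L u₁`, this forces `(u,v)` not to be `≈_L ⊥`.

Conversely, fix a deterministic co-Büchi automaton for `L` with `K` states. A pair `(a,b)` is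
not `≈_L ⊥` iff `b` can be completed to a rank-2 loop at a state reached on a word `∼_L a`.
Hence safe languages take finitely many values, and a rank-2 run on `y^K` can be pumped to one
on `y^(K+1)`. If `(u,v)` is not `≈_L ⊥`, witnessed by `uvx ∼_L u`, a pair `(w₁, w₂(vx)^K)` over
`u` with `⊆`-minimal safe language is pointed and has `v` in its safe language; its class is
reached from an initial state along `u` by rank-1 transitions and then along `v` by rank-2
transitions.
-/

section Words

variable {A : Type}

lemma appW_of_lt (u : List A) (w : ℕ → A) {n : ℕ} (h : n < u.length) :
    appW u w n = u[n] := dif_pos h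

lemma appW_of_le (u : List A) (w : ℕ → A) {n : ℕ} (h : u.length ≤ n) :
    appW u w n = w (n - u.length) := dif_neg (by omega)

lemma appW_nil (w : ℕ → A) : appW [] w = w := by
  funext n
  simp [appW]

lemma appW_append (u v : List A) (w : ℕ → A) :
    appW (u ++ v) w = appW u (appW v w) := by
  funext n
  rcases lt_or_ge n u.length with h | h
  · rw [appW_of_lt _ _ (by simp; omega), appW_of_lt _ _ h, List.getElem_append_left h]
  · rw [appW_of_le u _ h]
    rcases lt_or_ge n (u ++ v).length with h' | h'
    · rw [appW_of_lt _ _ h', appW_of_lt v _ (by simp at h'; omega),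
        List.getElem_append_right h]
    · rw [appW_of_le _ _ h', appW_of_le v _ (by simp at h'; omega)]
      simp only [List.length_append, Nat.sub_sub]

lemma repCat_add (w : List A) (m n : ℕ) : repCat w (m + n) = repCat w m ++ repCat w n := by
  induction m with
  | zero => simp [repCat]
  | succ m ih => rw [Nat.succ_add, repCat, repCat, ih, List.append_assoc]

lemma repCat_one (w : List A) : repCat w 1 = w := by simp [repCat]

lemma length_repCat (w : List A) (m : ℕ) : (repCat w m).length = m * w.length := by
  induction m with
  | zero => simp [repCat]
  | succ m ih => simp [repCat, ih, Nat.succ_mul, Nat.add_comm]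

lemma repCat_ne_nil {w : List A} (hw : w ≠ []) {m : ℕ} (hm : m ≠ 0) : repCat w m ≠ [] := by
  obtain ⟨m, rfl⟩ := Nat.exists_eq_succ_of_ne_zero hm
  simp [repCat, hw]

variable [Nonempty A]

lemma iterW_of_ne_nil {w : List A} (hw : w ≠ []) (n : ℕ) :
    iterW w n = w[n % w.length]'(Nat.mod_lt _ (List.length_pos_iff.mpr hw)) := dif_neg hw

lemma appW_iterW {w : List A} (hw : w ≠ []) : appW w (iterW w) = iterW w := by
  funext n
  rcases lt_or_ge n w.length with h | h
  · simp [appW_of_lt _ _ h, iterW_of_ne_nil hw, Nat.mod_eq_of_lt h]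
  · simp [appW_of_le _ _ h, iterW_of_ne_nil hw, ← Nat.mod_eq_sub_mod h]

lemma eq_iterW_of_appW_eq {w : List A} (hw : w ≠ []) {α : ℕ → A} (h : appW w α = α) :
    α = iterW w := by
  funext n
  induction n using Nat.strong_induction_on with
  | _ n ih =>
    rw [← h, ← appW_iterW hw]
    rcases lt_or_ge n w.length with hn | hn
    · rw [appW_of_lt _ _ hn, appW_of_lt _ _ hn]
    · rw [appW_of_le _ _ hn, appW_of_le _ _ hn]
      exact ih _ (by have := List.length_pos_iff.mpr hw; omega)

lemma appW_iterW_rotate {u v : List A} (h : u ++ v ≠ []) :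
    appW u (iterW (v ++ u)) = iterW (u ++ v) := by
  refine eq_iterW_of_appW_eq h ?_
  have hvu : v ++ u ≠ [] := by
    simp only [ne_eq, List.append_eq_nil_iff] at h ⊢
    tauto
  rw [appW_append, ← appW_append v u, appW_iterW hvu]

lemma appW_repCat_iterW {w : List A} (hw : w ≠ []) (k : ℕ) :
    appW (repCat w k) (iterW w) = iterW w := by
  induction k with
  | zero => exact appW_nil _
  | succ k ih => rw [repCat, appW_append, ih, appW_iterW hw]

lemma iterW_repCat {w : List A} (hw : w ≠ []) {k : ℕ} (hk : k ≠ 0) :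
    iterW (repCat w k) = iterW w :=
  (eq_iterW_of_appW_eq (repCat_ne_nil hw hk) (appW_repCat_iterW hw k)).symm

end Words

section Residuals

variable {A : Type} {L : Set (ℕ → A)} {a b c : List A}

lemma SimL.rfl : SimL L a a := fun _ => Iff.rfl

lemma SimL.symm (h : SimL L a b) : SimL L b a := fun w => (h w).symm

lemma SimL.trans (h : SimL L a b) (h' : SimL L b c) : SimL L a c := fun w => (h w).trans (h' w)

lemma SimL.append (h : SimL L a b) (z : List A) : SimL L (a ++ z) (b ++ z) := by
  intro w
  rw [appW_append, appW_append]
  exact h _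

lemma SimL.append_repCat (h : SimL L (a ++ b) a) (k : ℕ) : SimL L (a ++ repCat b k) a := by
  induction k with
  | zero => simpa [repCat] using SimL.rfl
  | succ k ih => simpa [repCat] using (h.append (repCat b k)).trans ih

variable [Nonempty A]

lemma not_approxBot_nil (L : Set (ℕ → A)) (a : List A) : ¬ApproxBot L a [] := fun h => h.1 rfl

lemma not_approxBot_iff (hb : b ≠ []) :
    ¬ApproxBot L a b ↔ ∃ z, SimL L (a ++ b ++ z) a ∧ upW a (b ++ z) ∈ L := by
  simp [ApproxBot, hb]

lemma ApproxBot.append (h : ApproxBot L a b) (z : List A) : ApproxBot L a (b ++ z) :=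
  ⟨by simp [h.1], fun x hx => by simpa using h.2 (z ++ x) (by simpa using hx)⟩

lemma sfl_append (a b z : List A) : Sfl L a (b ++ z) = {y | z ++ y ∈ Sfl L a b} := by
  ext y
  simp [Sfl]

lemma not_approxBot_repCat (hb : b ≠ []) (hloop : SimL L (a ++ b) a) (hmem : upW a b ∈ L)
    (k : ℕ) : ¬ApproxBot L a (repCat b k) := by
  rcases eq_or_ne k 0 with rfl | hk
  · exact not_approxBot_nil L a
  refine (not_approxBot_iff (repCat_ne_nil hb hk)).2 ⟨[], ?_, ?_⟩
  · simpa using hloop.append_repCat k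
  · simpa [upW, iterW_repCat hb hk] using hmem

lemma sfl_subset_of_simL {w₁ w₂ u₁ : List A} (h : SimL L (w₁ ++ w₂) u₁) (u₂ : List A) :
    Sfl L w₁ (w₂ ++ u₂) ⊆ Sfl L u₁ u₂ := by
  intro x hx
  rcases eq_or_ne (u₂ ++ x) [] with hnil | hne
  · simpa [Sfl, hnil] using not_approxBot_nil L u₁
  obtain ⟨y, hsim, hmem⟩ := (not_approxBot_iff (by simp_all)).1 hx
  refine (not_approxBot_iff hne).2 ⟨y ++ w₂, ?_, ?_⟩
  · have h1 := h.symm.append (u₂ ++ x ++ y ++ w₂)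
    have h2 := hsim.append w₂
    simp only [List.append_assoc] at h1 h2 ⊢
    exact h1.trans (h2.trans h)
  · have hrot : appW w₂ (iterW (u₂ ++ x ++ y ++ w₂)) = iterW (w₂ ++ (u₂ ++ x ++ y)) :=
      appW_iterW_rotate (by simp_all)
    rw [upW, ← List.append_assoc, h.symm, appW_append, hrot]
    simpa [upW] using hmem

lemma IsPointed.append (h : IsPointed L a b) (hc : c ∈ Sfl L a b) : IsPointed L a (b ++ c) := by
  refine ⟨hc, fun u₁ u₂ hsim hnb => ?_⟩
  have hnb' : ¬ApproxBot L u₁ (u₂ ++ b) := fun hb => hnb (by simpa using hb.append c)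
  rw [sfl_append a b c, h.2 u₁ u₂ hsim hnb', ← List.append_assoc, sfl_append u₁ (u₂ ++ b) c]

end Residuals

lemma exists_lt_le_card_map_eq {Q : Type} [Fintype Q] (f : ℕ → Q) :
    ∃ i j, i < j ∧ j ≤ Fintype.card Q ∧ f i = f j := by
  obtain ⟨i, j, hne, heq⟩ :=
    Fintype.exists_ne_map_eq_of_card_lt (fun i : Fin (Fintype.card Q + 1) => f i) (by simp)
  rcases lt_or_gt_of_ne (Fin.val_injective.ne hne) with h | h
  · exact ⟨i, j, h, by omega, heq⟩
  · exact ⟨j, i, h, by omega, heq.symm⟩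

namespace CoBuchi

variable {A Q : Type} {M : CoBuchi A Q}

lemma safeReach_append {p r : Q} {x y : List A} :
    M.SafeReach p (x ++ y) r ↔ ∃ q, M.SafeReach p x q ∧ M.SafeReach q y r := by
  induction x generalizing p with
  | nil => simp [SafeReach]
  | cons a x ih => simp only [List.cons_append, SafeReach, ih]; grind

lemma Reach.snoc {p q q' : Q} {w : List A} {c : A} {r : Rk} (h : M.Reach p w q)
    (h' : (q, c, r, q') ∈ M.delta) : M.Reach p (w ++ [c]) q' := by
  induction w generalizing p with
  | nil => exact (show p = q from h) ▸ ⟨r, q', h', rfl⟩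
  | cons a w ih =>
    obtain ⟨r₀, p₁, hp₁, hrest⟩ := h
    exact ⟨r₀, p₁, hp₁, ih hrest⟩

lemma prefW_succ (α : ℕ → A) (n : ℕ) : prefW α (n + 1) = prefW α n ++ [α n] := by
  simp [prefW, List.range_succ]

lemma prefW_appW (u : List A) (β : ℕ → A) (k : ℕ) :
    prefW (appW u β) (u.length + k) = u ++ prefW β k := by
  induction k with
  | zero =>
    refine List.ext_getElem (by simp [prefW]) fun i _ h => ?_
    simp [prefW, appW_of_lt _ _ (by simpa [prefW] using h)]
  | succ k ih =>
    rw [← Nat.add_assoc, prefW_succ, ih, prefW_succ, appW_of_le _ _ (by omega)]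
    simp

namespace Deterministic

variable (hdet : M.Deterministic)

noncomputable def step (q : Q) (a : A) : Rk × Q := (hdet.2 q a).exists.choose

lemma step_mem (q : Q) (a : A) : (q, a, (hdet.step q a).1, (hdet.step q a).2) ∈ M.delta :=
  (hdet.2 q a).exists.choose_spec

lemma step_eq_of_mem {q q' : Q} {a : A} {r : Rk} (h : (q, a, r, q') ∈ M.delta) :
    hdet.step q a = (r, q') :=
  (hdet.2 q a).unique (hdet.step_mem q a) h

noncomputable def run (q : Q) (w : List A) : Q := w.foldl (fun p a => (hdet.step p a).2) q

lemma run_append (q : Q) (x y : List A) : hdet.run q (x ++ y) = hdet.run (hdet.run q x) y :=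
  List.foldl_append ..

lemma run_cons (q : Q) (a : A) (w : List A) :
    hdet.run q (a :: w) = hdet.run (hdet.step q a).2 w := rfl

lemma run_singleton (q : Q) (a : A) : hdet.run q [a] = (hdet.step q a).2 := rfl

noncomputable def start : Q := hdet.1.exists.choose

lemma start_mem : hdet.start ∈ M.init := hdet.1.exists.choose_spec

noncomputable def rank (q : Q) (α : ℕ → A) (n : ℕ) : Rk :=
  (hdet.step (hdet.run q (prefW α n)) (α n)).1

lemma mem_langFrom_iff (q : Q) (α : ℕ → A) :
    α ∈ M.LangFrom q ↔ ∃ N, ∀ n, N ≤ n → hdet.rank q α n = Rk.two := by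
  constructor
  · rintro ⟨ρ, r, h₀, hstep, N, hN⟩
    have hρ : ∀ n, ρ n = hdet.run q (prefW α n) := by
      intro n
      induction n with
      | zero => simp [h₀, prefW, run]
      | succ k ih =>
        rw [prefW_succ, run_append, ← ih, run_singleton, hdet.step_eq_of_mem (hstep k)]
    refine ⟨N, fun n hn => ?_⟩
    rw [rank, ← hρ, hdet.step_eq_of_mem (hstep n)]
    exact hN n hn
  · rintro ⟨N, hN⟩
    refine ⟨fun n => hdet.run q (prefW α n), hdet.rank q α, by simp [prefW, run], fun n => ?_,
      N, hN⟩
    show (hdet.run q (prefW α n), α n, _, hdet.run q (prefW α (n + 1))) ∈ M.delta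
    rw [prefW_succ, run_append]
    exact hdet.step_mem _ _

lemma rank_appW_add (q : Q) (g : List A) (β : ℕ → A) (k : ℕ) :
    hdet.rank q (appW g β) (g.length + k) = hdet.rank (hdet.run q g) β k := by
  simp only [rank, prefW_appW, run_append, appW_of_le g β (Nat.le_add_right _ _),
    Nat.add_sub_cancel_left]

lemma appW_mem_langFrom_iff (q : Q) (g : List A) (β : ℕ → A) :
    appW g β ∈ M.LangFrom q ↔ β ∈ M.LangFrom (hdet.run q g) := by
  rw [hdet.mem_langFrom_iff, hdet.mem_langFrom_iff]
  constructor
  · rintro ⟨N, hN⟩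
    exact ⟨N, fun k hk => hdet.rank_appW_add q g β k ▸ hN _ (by omega)⟩
  · rintro ⟨N, hN⟩
    refine ⟨g.length + N, fun n hn => ?_⟩
    obtain ⟨k, rfl⟩ := Nat.exists_eq_add_of_le (le_of_add_le_left hn)
    rw [rank_appW_add]
    exact hN k (by omega)

lemma appW_mem_lang_iff (g : List A) (β : ℕ → A) :
    appW g β ∈ M.Lang ↔ β ∈ M.LangFrom (hdet.run hdet.start g) := by
  rw [← appW_mem_langFrom_iff]
  exact ⟨fun ⟨p, hp, h⟩ => hdet.1.unique hp hdet.start_mem ▸ h, fun h => ⟨_, hdet.start_mem, h⟩⟩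

lemma simL_of_run_eq {a b : List A} (h : hdet.run hdet.start a = hdet.run hdet.start b) :
    SimL M.Lang a b := by
  intro w
  rw [hdet.appW_mem_lang_iff, hdet.appW_mem_lang_iff, h]

lemma run_eq_of_safeReach {p q : Q} {w : List A} (h : M.SafeReach p w q) : hdet.run p w = q := by
  induction w generalizing p with
  | nil => exact h
  | cons a w ih =>
    obtain ⟨p₁, hp₁, hrest⟩ := h
    rw [← ih hrest, ← List.singleton_append, run_append]
    simp [run, hdet.step_eq_of_mem hp₁]

lemma safeReach_run_iff (q : Q) (g : List A) (β : ℕ → A) :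
    M.SafeReach q g (hdet.run q g) ↔ ∀ n < g.length, hdet.rank q (appW g β) n = Rk.two := by
  induction g generalizing q with
  | nil => simp [SafeReach, run]
  | cons a g ih =>
    have hsucc (k : ℕ) : hdet.rank q (appW (a :: g) β) (k + 1)
        = hdet.rank (hdet.step q a).2 (appW g β) k := by
      have := hdet.rank_appW_add q [a] (appW g β) k
      rwa [← appW_append, List.singleton_append, List.length_singleton, Nat.add_comm,
        run_singleton] at this
    have hzero : hdet.rank q (appW (a :: g) β) 0 = (hdet.step q a).1 := by
      simp [rank, prefW, run, appW_of_lt]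
    simp only [List.length_cons, Nat.forall_lt_succ_left', hzero, hsucc, ← ih]
    constructor
    · rintro ⟨p, hp, hrest⟩
      rw [run_cons, hdet.step_eq_of_mem hp] at hrest
      rw [hdet.step_eq_of_mem hp]
      exact ⟨rfl, hrest⟩
    · intro ⟨hrk, hrest⟩
      refine ⟨(hdet.step q a).2, ?_, hrest⟩
      simpa [hrk] using hdet.step_mem q a

lemma safeReach_append_run {p r : Q} {x y : List A} (h : M.SafeReach p (x ++ y) r) :
    M.SafeReach p x (hdet.run p x) ∧ M.SafeReach (hdet.run p x) y r := by
  obtain ⟨q, hx, hy⟩ := safeReach_append.1 h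
  rw [hdet.run_eq_of_safeReach hx]
  exact ⟨hx, hy⟩

/-- Pigeonhole on the states between consecutive copies of `y`. -/
lemma safeReach_repCat_pump [Fintype Q] (hdet : M.Deterministic) {c c' : Q} {y : List A} {K : ℕ}
    (h : M.SafeReach c (repCat y K) c') (hK : Fintype.card Q ≤ K) :
    ∃ n, M.SafeReach c (repCat y (K + 1 + n)) c' := by
  set b := fun l => hdet.run c (repCat y l)
  have hsplit : ∀ l ≤ K, M.SafeReach c (repCat y l) (b l) ∧
      M.SafeReach (b l) (repCat y (K - l)) c' := fun l hl =>
    hdet.safeReach_append_run (by rwa [← repCat_add, Nat.add_sub_cancel' hl])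
  obtain ⟨i, j, hij, hj, heq⟩ := exists_lt_le_card_map_eq b
  have hjK : j ≤ K := hj.trans hK
  have hcycle : M.SafeReach (b j) (repCat y (j - i)) (b j) := by
    have hij' : M.SafeReach (b i) (repCat y (j - i)) (b j) :=
      (hdet.safeReach_append_run (x := repCat y i) (by
        rw [← repCat_add, Nat.add_sub_cancel' hij.le]; exact (hsplit j hjK).1)).2
    rwa [heq] at hij'
  refine ⟨j - i - 1, ?_⟩
  rw [show K + 1 + (j - i - 1) = j + ((j - i) + (K - j)) by omega, repCat_add, repCat_add]
  exact safeReach_append.2 ⟨b j, (hsplit j hjK).1,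
    safeReach_append.2 ⟨b j, hcycle, (hsplit j hjK).2⟩⟩

variable [Nonempty A]

lemma safeLoop_mem_langFrom (hdet : M.Deterministic) {s : Q} {P : List A}
    (hs : M.SafeReach s P s) (hP : P ≠ []) :
    iterW P ∈ M.LangFrom s := by
  have hrun := hdet.run_eq_of_safeReach hs
  have hsafe := (hdet.safeReach_run_iff s P (iterW P)).1 (by rwa [hrun])
  rw [appW_iterW hP] at hsafe
  suffices ∀ n, hdet.rank s (iterW P) n = Rk.two from
    (hdet.mem_langFrom_iff s _).2 ⟨0, fun n _ => this n⟩
  intro n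
  induction n using Nat.strong_induction_on with
  | _ n ih =>
    rcases lt_or_ge n P.length with hn | hn
    · exact hsafe n hn
    · obtain ⟨k, rfl⟩ := Nat.exists_eq_add_of_le hn
      rw [← appW_iterW hP, rank_appW_add, hrun]
      exact ih k (by have := List.length_pos_iff.mpr hP; omega)

lemma exists_safeLoop_of_mem_langFrom [Fintype Q] {s : Q} {P : List A}
    (h : iterW P ∈ M.LangFrom s) (hP : P ≠ []) :
    ∃ k m, m ≠ 0 ∧
      M.SafeReach (hdet.run s (repCat P k)) (repCat P m) (hdet.run s (repCat P k)) := by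
  obtain ⟨N, hN⟩ := (hdet.mem_langFrom_iff s _).1 h
  obtain ⟨i, j, hij, -, heq⟩ := exists_lt_le_card_map_eq fun i => hdet.run s (repCat P (N + i))
  refine ⟨N + i, j - i, by omega, ?_⟩
  have hrun : hdet.run (hdet.run s (repCat P (N + i))) (repCat P (j - i))
      = hdet.run s (repCat P (N + i)) := by
    rw [← run_append, ← repCat_add, show N + i + (j - i) = N + j by omega, heq]
  have hsafe := (hdet.safeReach_run_iff _ (repCat P (j - i)) (iterW P)).2 fun n _ => by
    rw [appW_repCat_iterW hP, ← rank_appW_add, appW_repCat_iterW hP]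
    refine hN _ (le_trans ?_ (Nat.le_add_right _ _))
    rw [length_repCat]
    exact le_trans (Nat.le_add_right N i) (Nat.le_mul_of_pos_right _ (List.length_pos_iff.mpr hP))
  rwa [hrun] at hsafe

lemma not_approxBot_iff_safeLoop [Fintype Q] {a b : List A} :
    ¬ApproxBot M.Lang a b ↔ ∃ g z, SimL M.Lang g a ∧
      M.SafeReach (hdet.run hdet.start g) (b ++ z) (hdet.run hdet.start g) := by
  constructor
  · intro h
    rcases eq_or_ne b [] with rfl | hb
    · exact ⟨a, [], SimL.rfl, rfl⟩
    obtain ⟨t, hsim, hmem⟩ := (not_approxBot_iff hb).1 h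
    rw [upW, hdet.appW_mem_lang_iff] at hmem
    obtain ⟨k, m, hm, hloop⟩ := hdet.exists_safeLoop_of_mem_langFrom hmem (by simp [hb])
    obtain ⟨m, rfl⟩ := Nat.exists_eq_succ_of_ne_zero hm
    refine ⟨a ++ repCat (b ++ t) k, t ++ repCat (b ++ t) m, ?_, ?_⟩
    · exact SimL.append_repCat (by simpa using hsim) k
    · simpa [run_append, repCat] using hloop
  · rintro ⟨g, z, hg, hloop⟩
    rcases eq_or_ne b [] with rfl | hb
    · exact not_approxBot_nil _ a
    have hgz : SimL M.Lang (g ++ (b ++ z)) g :=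
      hdet.simL_of_run_eq (by rw [run_append, hdet.run_eq_of_safeReach hloop])
    refine (not_approxBot_iff hb).2 ⟨z, ?_, (hg _).1 ?_⟩
    · rw [List.append_assoc]
      exact (hg.symm.append _).trans (hgz.trans hg)
    · exact (hdet.appW_mem_lang_iff _ _).2 (hdet.safeLoop_mem_langFrom hloop (by simp [hb]))

end Deterministic

end CoBuchi

section Recognizable

open CoBuchi

variable {A : Type} [Nonempty A] {L : Set (ℕ → A)}

/-- `Sfl L a b` only depends on the pairs `(s, s')` with `s` reached on a word `∼_L a` and
`s →₂^b s'`. -/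
lemma finite_range_sfl (hrec : DCWRecognizable L) :
    (Set.range fun p : List A × List A => Sfl L p.1 p.2).Finite := by
  obtain ⟨Q, _, M, hdet, rfl⟩ := hrec
  refine (Set.finite_range fun D : Set (Q × Q) =>
    {x : List A | ∃ p ∈ D, ∃ z, M.SafeReach p.2 (x ++ z) p.1}).subset ?_
  rintro _ ⟨⟨a, b⟩, rfl⟩
  refine ⟨{p | (∃ g, SimL M.Lang g a ∧ hdet.run hdet.start g = p.1) ∧ M.SafeReach p.1 b p.2}, ?_⟩
  ext x
  simp only [Sfl, Set.mem_ofPred_eq, hdet.not_approxBot_iff_safeLoop, List.append_assoc]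
  constructor
  · rintro ⟨⟨s, s'⟩, ⟨⟨g, hg, rfl⟩, hb⟩, z, hz⟩
    exact ⟨g, z, hg, safeReach_append.2 ⟨_, hb, hz⟩⟩
  · rintro ⟨g, z, hg, hloop⟩
    obtain ⟨q, hb, hz⟩ := safeReach_append.1 hloop
    exact ⟨(_, q), ⟨⟨g, hg, rfl⟩, hb⟩, z, hz⟩

lemma exists_pumping_bound (hrec : DCWRecognizable L) : ∃ K, ∀ a b y : List A,
    ¬ApproxBot L a (b ++ repCat y K) → ¬ApproxBot L a (b ++ repCat y (K + 1)) := by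
  obtain ⟨Q, _, M, hdet, rfl⟩ := hrec
  refine ⟨Fintype.card Q, fun a b y h => ?_⟩
  obtain ⟨g, z, hg, hloop⟩ := hdet.not_approxBot_iff_safeLoop.1 h
  rw [List.append_assoc] at hloop
  obtain ⟨c, hb, hrest⟩ := safeReach_append.1 hloop
  obtain ⟨c', hK, hz⟩ := safeReach_append.1 hrest
  obtain ⟨n, hpump⟩ := hdet.safeReach_repCat_pump hK le_rfl
  refine hdet.not_approxBot_iff_safeLoop.2 ⟨g, repCat y n ++ z, hg, ?_⟩
  rw [List.append_assoc, ← List.append_assoc (repCat y (Fintype.card Q + 1)), ← repCat_add]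
  exact safeReach_append.2 ⟨c, hb, safeReach_append.2 ⟨c', hpump, hz⟩⟩

lemma exists_isPointed_append (hrec : DCWRecognizable L) {a b : List A}
    (h : ¬ApproxBot L a b) : ∃ w₁ w₂, SimL L (w₁ ++ w₂) a ∧ IsPointed L w₁ (w₂ ++ b) := by
  set F := {p : List A × List A | SimL L (p.1 ++ p.2) a ∧ ¬ApproxBot L p.1 (p.2 ++ b)}
  have hfin : ((fun p : List A × List A => Sfl L p.1 (p.2 ++ b)) '' F).Finite :=
    (finite_range_sfl hrec).subset (by rintro _ ⟨p, -, rfl⟩; exact ⟨(p.1, p.2 ++ b), rfl⟩)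
  obtain ⟨⟨w₁, w₂⟩, ⟨hsim, hnb⟩, hmin⟩ :=
    hfin.exists_minimalFor' _ F ⟨(a, []), by simpa [F] using ⟨SimL.rfl, h⟩⟩
  refine ⟨w₁, w₂, hsim, hnb, fun u₁ u₂ hu hnb' => ?_⟩
  have hsub := sfl_subset_of_simL hu (w₂ ++ b)
  have hmem : (u₁, u₂ ++ w₂) ∈ F :=
    ⟨by simpa using (hu.append w₂).trans hsim, by simpa using hnb'⟩
  exact le_antisymm (by simpa using hmin hmem (by simpa using hsub)) hsub

lemma exists_isPointed_mem_sfl (hrec : DCWRecognizable L) {u v : List A}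
    (h : ¬ApproxBot L u v) :
    ∃ u₁ u₂, IsPointed L u₁ u₂ ∧ SimL L (u₁ ++ u₂) u ∧ v ∈ Sfl L u₁ u₂ := by
  rcases eq_or_ne v [] with rfl | hv
  · obtain ⟨w₁, w₂, hsim, hpt⟩ := exists_isPointed_append hrec (not_approxBot_nil L u)
    exact ⟨w₁, w₂ ++ [], hpt, by simpa using hsim, by simpa [Sfl] using hpt.1⟩
  obtain ⟨x, hloop, hmem⟩ := (not_approxBot_iff hv).1 h
  obtain ⟨K, hpump⟩ := exists_pumping_bound hrec
  have hloop' : SimL L (u ++ (v ++ x)) u := by simpa using hloop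
  obtain ⟨w₁, w₂, hsim, hpt⟩ := exists_isPointed_append hrec
    (not_approxBot_repCat (by simp [hv]) hloop' hmem K)
  refine ⟨w₁, w₂ ++ repCat (v ++ x) K, hpt, ?_, ?_⟩
  · simpa using (hsim.append _).trans (hloop'.append_repCat K)
  · have := hpump w₁ w₂ (v ++ x) hpt.1
    rw [repCat_add, repCat_one] at this
    exact fun hbot => this (by simpa using hbot.append x)

end Recognizable

section Canonical

open CoBuchi

variable {A : Type} [Nonempty A] {L : Set (ℕ → A)}

lemma cls_eq_cls_iff {u v u' v' : List A} {h : IsPointed L u v} {h' : IsPointed L u' v'} :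
    cls L u v h = cls L u' v' h' ↔ EquivL L u v u' v' :=
  Quotient.eq

lemma CanonState.exists_eq_cls (q : CanonState L) : ∃ u v h, q = cls L u v h := by
  obtain ⟨⟨⟨u, v⟩, h⟩, rfl⟩ := Quotient.exists_rep q
  exact ⟨u, v, h, rfl⟩

lemma simL_of_mem_canonAut_delta {a b a' b' : List A} {h : IsPointed L a b}
    {h' : IsPointed L a' b'} {c : A} {r : Rk}
    (ht : (cls L a b h, c, r, cls L a' b' h') ∈ (canonAut L).delta) :
    SimL L (a' ++ b') (a ++ b ++ [c]) := by
  rcases ht with ⟨u, v, hp, hp', -, h₁, -, h₂⟩ | ⟨u, v, u', v', hp, hp', hsim, h₁, -, h₂⟩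
  · have e₁ := (cls_eq_cls_iff.1 h₁).1
    have e₂ := (cls_eq_cls_iff.1 h₂).1
    rw [← List.append_assoc] at e₂
    exact e₂.trans (e₁.append [c]).symm
  · exact (cls_eq_cls_iff.1 h₂).1.trans (hsim.symm.trans ((cls_eq_cls_iff.1 h₁).1.append [c]).symm)

lemma simL_of_reach {a b a' b' w : List A} {h : IsPointed L a b} {h' : IsPointed L a' b'}
    (hr : (canonAut L).Reach (cls L a b h) w (cls L a' b' h')) :
    SimL L (a' ++ b') (a ++ b ++ w) := by
  induction w generalizing a b with
  | nil => simpa using (cls_eq_cls_iff.1 hr).1.symm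
  | cons c w ih =>
    obtain ⟨r, p, ht, hrest⟩ := hr
    obtain ⟨a₁, b₁, h₁, rfl⟩ := p.exists_eq_cls
    simpa using (ih hrest).trans ((simL_of_mem_canonAut_delta ht).append w)

lemma mem_sfl_of_safeReach {a b w : List A} {h : IsPointed L a b} {q : CanonState L}
    (hs : (canonAut L).SafeReach (cls L a b h) w q) : w ∈ Sfl L a b := by
  induction w generalizing a b with
  | nil => simpa [Sfl] using h.1
  | cons c w ih =>
    obtain ⟨q₁, ht, hrest⟩ := hs
    rcases ht with ⟨u, v, hp, hp', -, h₁, -, h₂⟩ | ⟨-, -, -, -, -, -, -, -, hr, -⟩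
    · change q₁ = cls L u (v ++ [c]) hp' at h₂
      have hw : w ∈ Sfl L u (v ++ [c]) := ih (h₂ ▸ hrest)
      rw [sfl_append, ← (cls_eq_cls_iff.1 h₁).2] at hw
      exact hw
    · exact Rk.noConfusion hr

lemma safeReach_cls {a b w : List A} (h : IsPointed L a b) (hw : w ∈ Sfl L a b) :
    (canonAut L).SafeReach (cls L a b h) w (cls L a (b ++ w) (h.append hw)) := by
  induction w generalizing b with
  | nil => exact cls_eq_cls_iff.2 (by simp only [List.append_nil]; exact ⟨SimL.rfl, rfl⟩)
  | cons c w ih =>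
    have hc : [c] ∈ Sfl L a b := fun hbot => hw (by simpa using hbot.append w)
    have hw' : w ∈ Sfl L a (b ++ [c]) := by simpa [sfl_append] using hw
    refine ⟨cls L a (b ++ [c]) (h.append hc), Or.inl ⟨a, b, h, h.append hc, hc, rfl, rfl, rfl⟩, ?_⟩
    convert ih (h.append hc) hw' using 2
    simp

lemma exists_init_reach_cls (hrec : DCWRecognizable L) {a b w : List A} (h : IsPointed L a b)
    (hsim : SimL L (a ++ b) w) :
    ∃ p₀ ∈ (canonAut L).init, (canonAut L).Reach p₀ w (cls L a b h) := by
  induction w using List.reverseRecOn generalizing a b with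
  | nil => exact ⟨cls L a b h, ⟨a, b, h, rfl, hsim⟩, rfl⟩
  | append_singleton w c ih =>
    obtain ⟨a', b', h', hsim', -⟩ := exists_isPointed_mem_sfl hrec (not_approxBot_nil L w)
    obtain ⟨p₀, hinit, hreach⟩ := ih h' hsim'
    exact ⟨p₀, hinit, hreach.snoc (Or.inr ⟨a', b', a, b, h', h, (hsim'.append [c]).trans hsim.symm,
      rfl, rfl, rfl⟩)⟩

end Canonical

theorem stmt15_general {A : Type} [Nonempty A] (L : Set (ℕ → A))
    (hrec : DCWRecognizable L) (u v : List A) :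
    theta L u v = ∅ ↔ ApproxBot L u v := by
  rw [Set.eq_empty_iff_forall_notMem]
  constructor
  · intro hθ
    by_contra hnb
    obtain ⟨u₁, u₂, hpt, hsim, hv⟩ := exists_isPointed_mem_sfl hrec hnb
    obtain ⟨p₀, hinit, hreach⟩ := exists_init_reach_cls hrec hpt hsim
    exact hθ _ ⟨p₀, hinit, _, hreach, safeReach_cls hpt hv⟩
  · rintro hbot q ⟨p₀, ⟨a₀, b₀, h₀, rfl, hinit⟩, p, hreach, hsafe⟩
    obtain ⟨a, b, h, rfl⟩ := p.exists_eq_cls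
    have hsim : SimL L (a ++ b) u := (simL_of_reach hreach).trans (by simpa using hinit.append u)
    exact sfl_subset_of_simL hsim [] (by simpa using mem_sfl_of_safeReach hsafe)
      (by simpa using hbot)

/-- `θ(u,v) = ∅` iff `(u,v) ≈_L ⊥`. -/
theorem stmt15 {A : Type} [Nonempty A] [Fintype A] (L : Set (ℕ → A))
    (hrec : DCWRecognizable L) (u v : List A) :
    theta L u v = ∅ ↔ ApproxBot L u v :=
  stmt15_general L hrec u v
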